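/- Let (U_k)_{k≥1} be i.i.d. with P(U_k = ±1) = 1/2, a_n = 1 - 1/n, X_t = Σ_{n: a_n ≤ t} (1/n)U_{2n}U_{2n+1}, F_t = σ({U_{2n} : n ≥ 1} ∪ {X_s : s ≤ t}). Then X is an (F_t)-martingale. -/

import Mathlib

/-!
Write `X_t = Σ c_n(t) v_n` with `v_n = U_{2n} U_{2n+1}`. The `v_n` are orthonormal in `L²` and
`Σ c_n(t)² < ∞`, so by Fatou's lemma the a.s. limit `X_t` is also the `L²`, hence `L¹`, limit of
the partial sums: `X_t` is integrable and set integrals pass to the limit. If `a_n > s`, every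
generator of `F_s` is, up to null sets, measurable with respect to the coins other than
`U_{2n+1}`; so `U_{2n+1}` is independent of `1_A U_{2n}` for `A ∈ F_s`, and `∫_A v_n = 0`. Hence
the partial sums at times `s ≤ t` have the same integral over `A`, and so do `X_s` and `X_t`.
-/

open MeasureTheory ProbabilityTheory Filter Topology
open scoped ENNReal

section OrthonormalSeries

variable {Ω : Type*} {m : MeasurableSpace Ω} {μ : Measure Ω}

lemma integral_sq_sum_of_orthonormal {ι : Type*} [DecidableEq ι] {v : ι → Ω → ℝ}
    (hv : ∀ i, MemLp (v i) 2 μ) (horth : ∀ i j, ∫ ω, v i ω * v j ω ∂μ = if i = j then 1 else 0) (c : ι → ℝ)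
    (s : Finset ι) :
    ∫ ω, (∑ i ∈ s, c i * v i ω) ^ 2 ∂μ = ∑ i ∈ s, c i ^ 2 := by
  have hint : ∀ i j, Integrable (fun ω => c i * c j * (v i ω * v j ω)) μ := fun i j =>
    ((hv i).integrable_mul (hv j)).const_mul _
  simp_rw [sq, Finset.sum_mul_sum, fun i j ω => mul_mul_mul_comm (c i) (v i ω) (c j) (v j ω)]
  rw [integral_finsetSum _ fun i _ => integrable_finsetSum _ fun j _ => hint i j]
  refine Finset.sum_congr rfl fun i hi => ?_
  simp_rw [integral_finsetSum _ fun j _ => hint i j, integral_const_mul, horth, mul_ite,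
    mul_one, mul_zero, Finset.sum_ite_eq s i, if_pos hi]

lemma eLpNorm_two_eq_ofReal_sqrt_integral_sq {f : Ω → ℝ} (hf : MemLp f 2 μ) :
    eLpNorm f 2 μ = ENNReal.ofReal √(∫ ω, f ω ^ 2 ∂μ) := by
  rw [← ofReal_lpNorm hf, lpNorm_eq_integral_norm_rpow_toReal two_ne_zero ENNReal.ofNat_ne_top hf.1,
    Real.sqrt_eq_rpow]
  simp [Real.norm_eq_abs, one_div]

lemma eLpNorm_sub_le_of_tendsto_ae {E : Type*} [NormedAddCommGroup E] {p : ℝ≥0∞} {f : ℕ → Ω → E}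
    (hf : ∀ n, AEStronglyMeasurable (f n) μ) {g : Ω → E}
    (hg : ∀ᵐ ω ∂μ, Tendsto (f · ω) atTop (𝓝 (g ω))) {B : ℕ → ℝ≥0∞}
    (hB : ∀ n k, n ≤ k → eLpNorm (f k - f n) p μ ≤ B n) (n : ℕ) :
    eLpNorm (g - f n) p μ ≤ B n :=
  Lp.eLpNorm_le_of_ae_tendsto ((eventually_ge_atTop n).mono (hB n))
    (fun k => (hf k).sub (hf n)) (by filter_upwards [hg] with ω h using h.sub_const _)

variable {v : ℕ → Ω → ℝ} {c : ℕ → ℝ} {X : Ω → ℝ}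

lemma eLpNorm_sub_partialSum_le_of_orthonormal (hv : ∀ n, MemLp (v n) 2 μ)
    (horth : ∀ i j, ∫ ω, v i ω * v j ω ∂μ = if i = j then 1 else 0)
    (hc : Summable fun n => c n ^ 2)
    (hX : ∀ᵐ ω ∂μ, Tendsto (fun N => ∑ n ∈ Finset.range N, c n * v n ω) atTop (𝓝 (X ω)))
    (N : ℕ) :
    eLpNorm (X - fun ω => ∑ n ∈ Finset.range N, c n * v n ω) 2 μ ≤
      ENNReal.ofReal √(∑' k, c (k + N) ^ 2) := by
  have hS : ∀ N, MemLp (fun ω => ∑ n ∈ Finset.range N, c n * v n ω) 2 μ := fun N =>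
    memLp_finsetSum _ fun n _ => (hv n).const_mul (c n)
  refine eLpNorm_sub_le_of_tendsto_ae (B := fun N => ENNReal.ofReal √(∑' k, c (k + N) ^ 2))
    (fun N => (hS N).1) hX (fun N M hNM => ?_) N
  have hdiff : ((fun ω => ∑ n ∈ Finset.range M, c n * v n ω) -
      fun ω => ∑ n ∈ Finset.range N, c n * v n ω) =
      fun ω => ∑ n ∈ Finset.Ico N M, c n * v n ω := by
    ext ω
    exact (Finset.sum_Ico_eq_sub _ hNM).symm
  rw [hdiff, eLpNorm_two_eq_ofReal_sqrt_integral_sq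
      (memLp_finsetSum _ fun n _ => (hv n).const_mul (c n)),
    integral_sq_sum_of_orthonormal hv horth, Finset.sum_Ico_eq_sum_range]
  gcongr
  simp_rw [add_comm N]
  exact Summable.sum_le_tsum _ (fun k _ => sq_nonneg _) ((summable_nat_add_iff N).mpr hc)

theorem memLp_two_and_tendsto_eLpNorm_of_orthonormal (hv : ∀ n, MemLp (v n) 2 μ)
    (horth : ∀ i j, ∫ ω, v i ω * v j ω ∂μ = if i = j then 1 else 0)
    (hc : Summable fun n => c n ^ 2)
    (hX : ∀ᵐ ω ∂μ, Tendsto (fun N => ∑ n ∈ Finset.range N, c n * v n ω) atTop (𝓝 (X ω))) :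
    MemLp X 2 μ ∧ Tendsto (fun N => eLpNorm (X - fun ω => ∑ n ∈ Finset.range N, c n * v n ω) 2 μ)
      atTop (𝓝 0) := by
  have hbound := eLpNorm_sub_partialSum_le_of_orthonormal hv horth hc hX
  refine ⟨⟨aestronglyMeasurable_of_tendsto_ae atTop
    (fun N => (memLp_finsetSum _ fun n _ => (hv n).const_mul (c n)).1) hX, ?_⟩, ?_⟩
  · simpa [Pi.sub_def] using (hbound 0).trans_lt ENNReal.ofReal_lt_top
  · have htail : Tendsto (fun N => ENNReal.ofReal √(∑' k, c (k + N) ^ 2)) atTop (𝓝 0) := by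
      simpa using ENNReal.tendsto_ofReal (tendsto_sum_nat_add fun n => c n ^ 2).sqrt
    exact tendsto_of_tendsto_of_tendsto_of_le_of_le tendsto_const_nhds htail
      (fun _ => zero_le) hbound

theorem tendsto_setIntegral_of_orthonormal [IsFiniteMeasure μ] (hv : ∀ n, MemLp (v n) 2 μ)
    (horth : ∀ i j, ∫ ω, v i ω * v j ω ∂μ = if i = j then 1 else 0)
    (hc : Summable fun n => c n ^ 2)
    (hX : ∀ᵐ ω ∂μ, Tendsto (fun N => ∑ n ∈ Finset.range N, c n * v n ω) atTop (𝓝 (X ω)))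
    (A : Set Ω) :
    Tendsto (fun N => ∫ ω in A, ∑ n ∈ Finset.range N, c n * v n ω ∂μ) atTop
      (𝓝 (∫ ω in A, X ω ∂μ)) := by
  obtain ⟨hXmem, hL2⟩ := memLp_two_and_tendsto_eLpNorm_of_orthonormal hv horth hc hX
  have hS : ∀ N, MemLp (fun ω => ∑ n ∈ Finset.range N, c n * v n ω) 2 μ := fun N =>
    memLp_finsetSum _ fun n _ => (hv n).const_mul (c n)
  have hL1 : ∀ N, eLpNorm ((fun ω => ∑ n ∈ Finset.range N, c n * v n ω) - X) 1 μ ≤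
      eLpNorm (X - fun ω => ∑ n ∈ Finset.range N, c n * v n ω) 2 μ *
        μ Set.univ ^ (1 / (1 : ℝ≥0∞).toReal - 1 / (2 : ℝ≥0∞).toReal) := fun N => by
    rw [eLpNorm_sub_comm]
    exact eLpNorm_le_eLpNorm_mul_rpow_measure_univ one_le_two (hXmem.1.sub (hS N).1)
  refine tendsto_setIntegral_of_L1' X hXmem.1
    (Eventually.of_forall fun N => (hS N).integrable one_le_two) ?_ A
  refine tendsto_of_tendsto_of_tendsto_of_le_of_le tendsto_const_nhds ?_ (fun _ => zero_le) hL1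
  simpa using ENNReal.Tendsto.mul_const hL2
    (Or.inr (ENNReal.rpow_ne_top_of_nonneg (by norm_num) (measure_ne_top μ _)))

end OrthonormalSeries

section SignVariables

variable {Ω : Type*} {m : MeasurableSpace Ω} {P : Measure Ω} {Y : Ω → ℝ}

lemma integral_eq_zero_of_symmetric_sign [IsFiniteMeasure P] (hY : Measurable Y)
    (hval : ∀ ω, Y ω = 1 ∨ Y ω = -1) (hsymm : P {ω | Y ω = 1} = P {ω | Y ω = -1}) :
    ∫ ω, Y ω ∂P = 0 := by
  have hplus : MeasurableSet {ω | Y ω = 1} := hY (measurableSet_singleton 1)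
  have hminus : MeasurableSet {ω | Y ω = -1} := hY (measurableSet_singleton (-1))
  have hdecomp : Y = {ω | Y ω = 1}.indicator 1 - {ω | Y ω = -1}.indicator 1 := by
    ext ω
    rcases hval ω with h | h <;> norm_num [Set.indicator_apply, h]
  rw [hdecomp, integral_sub' ((integrable_const 1).indicator hplus)
      ((integrable_const 1).indicator hminus), integral_indicator_one hplus,
    integral_indicator_one hminus, measureReal_def, measureReal_def, hsymm, sub_self]

lemma memLp_of_eq_one_or_neg_one [IsFiniteMeasure P] (hY : Measurable Y)
    (hval : ∀ ω, Y ω = 1 ∨ Y ω = -1) (p : ℝ≥0∞) : MemLp Y p P :=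
  MemLp.of_bound hY.aestronglyMeasurable 1 <| ae_of_all _ fun ω => by
    rcases hval ω with h | h <;> simp [h]

end SignVariables

section Independence

variable {Ω : Type*} {m : MeasurableSpace Ω} {P : Measure Ω}

lemma ProbabilityTheory.Indep.eventuallyMeasurableSpace_ae_left {m₁ m₂ : MeasurableSpace Ω}
    (h : Indep m₁ m₂ P) :
    Indep (eventuallyMeasurableSpace m₁ (ae P)) m₂ P := by
  rw [Indep_iff] at h ⊢
  rintro A B ⟨A', hA', hAA'⟩ hB
  have hinter : (A ∩ B : Set Ω) =ᵐ[P] (A' ∩ B : Set Ω) := hAA'.inter EventuallyEq.rfl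
  rw [measure_congr hinter, measure_congr hAA', h A' B hA' hB]

lemma eventuallyMeasurable_of_tendsto_ae {G : MeasurableSpace Ω} {f : ℕ → Ω → ℝ}
    (hf : ∀ n, Measurable[G] (f n)) {g : Ω → ℝ}
    (hg : ∀ᵐ ω ∂P, Tendsto (f · ω) atTop (𝓝 (g ω))) :
    EventuallyMeasurable G (ae P) g :=
  (Measurable.liminf hf).eventuallyMeasurable_of_eventuallyEq <| by
    filter_upwards [hg] with ω h using h.liminf_eq.symm

lemma setIntegral_mul_eq_zero_of_indep {H : MeasurableSpace Ω} (hH : H ≤ m) {Y W : Ω → ℝ}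
    (hY : Measurable[H] Y) (hW : AEStronglyMeasurable[m] W P)
    (hind : Indep H (MeasurableSpace.comap W inferInstance) P) (hW0 : ∫ ω, W ω ∂P = 0)
    {A : Set Ω} (hA : MeasurableSet[H] A) :
    ∫ ω in A, Y ω * W ω ∂P = 0 := by
  have hYA : Measurable[H] (A.indicator Y) := hY.indicator hA
  have hindep : IndepFun (A.indicator Y) W P :=
    (IndepFun_iff_Indep _ _ _).2 (indep_of_indep_of_le_left hind hYA.comap_le)
  rw [← integral_indicator (hH A hA)]
  simp_rw [Set.indicator_mul_left]
  rw [hindep.integral_fun_mul_eq_mul_integral (hYA.mono hH le_rfl).aestronglyMeasurable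
    hW, hW0, mul_zero]

end Independence

section JumpProcess

variable {Ω : Type*} {m : MeasurableSpace Ω} {P : Measure Ω} {U : ℕ → Ω → ℝ}

/-- Lean's `n` is the paper's `n + 1`: the jump `U_{2n+2} U_{2n+3} / (n + 1)` happens at time
`a_{n+1} = 1 - 1 / (n + 1)`. -/
noncomputable def jumpCoeff (t : ℝ) (n : ℕ) : ℝ :=
  if 1 - 1 / ((n : ℝ) + 1) ≤ t then 1 / ((n : ℝ) + 1) else 0

def coinPair (U : ℕ → Ω → ℝ) (n : ℕ) (ω : Ω) : ℝ :=
  U (2 * (n + 1)) ω * U (2 * (n + 1) + 1) ω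

noncomputable def jumpSum (U : ℕ → Ω → ℝ) (t : ℝ) (N : ℕ) (ω : Ω) : ℝ :=
  ∑ n ∈ Finset.range N, jumpCoeff t n * coinPair U n ω

abbrev coinFiltration (U : ℕ → Ω → ℝ) (X : ℝ → Ω → ℝ) (t : ℝ) : MeasurableSpace Ω :=
  (⨆ n : ℕ, MeasurableSpace.comap (U (2 * (n + 1))) inferInstance) ⊔
    (⨆ s ∈ Set.Icc (0 : ℝ) t, MeasurableSpace.comap (X s) inferInstance)

lemma jumpCoeff_of_lt {t : ℝ} {n : ℕ} (h : t < 1 - 1 / ((n : ℝ) + 1)) : jumpCoeff t n = 0 :=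
  if_neg h.not_ge

lemma summable_jumpCoeff_sq (t : ℝ) : Summable fun n => jumpCoeff t n ^ 2 := by
  have hsq : Summable fun n : ℕ => (1 / ((n : ℝ) + 1)) ^ 2 := by
    simpa [one_div, inv_pow] using
      (summable_nat_add_iff 1).mpr (Real.summable_one_div_nat_pow.mpr one_lt_two)
  refine hsq.of_nonneg_of_le (fun n => sq_nonneg _) fun n => ?_
  unfold jumpCoeff
  split_ifs
  · exact le_rfl
  · rw [zero_pow two_ne_zero]
    positivity

lemma coinPair_eq_one_or_neg_one (hval : ∀ k ω, U k ω = 1 ∨ U k ω = -1) (n : ℕ) (ω : Ω) :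
    coinPair U n ω = 1 ∨ coinPair U n ω = -1 := by
  rcases hval (2 * (n + 1)) ω with h | h <;> rcases hval (2 * (n + 1) + 1) ω with h' | h' <;>
    simp [coinPair, h, h']

lemma measurable_coinPair (hUmeas : ∀ k, Measurable (U k)) (n : ℕ) : Measurable (coinPair U n) :=
  (hUmeas _).mul (hUmeas _)

lemma memLp_coinPair [IsFiniteMeasure P] (hUmeas : ∀ k, Measurable (U k))
    (hval : ∀ k ω, U k ω = 1 ∨ U k ω = -1) (p : ℝ≥0∞) (n : ℕ) : MemLp (coinPair U n) p P :=
  memLp_of_eq_one_or_neg_one (measurable_coinPair hUmeas n) (coinPair_eq_one_or_neg_one hval n) p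

lemma integral_coinPair [IsFiniteMeasure P] (hUmeas : ∀ k, Measurable (U k))
    (hindep : iIndepFun U P) (hval : ∀ k ω, U k ω = 1 ∨ U k ω = -1)
    (hsymm : ∀ k, P {ω | U k ω = 1} = P {ω | U k ω = -1}) (n : ℕ) :
    ∫ ω, coinPair U n ω ∂P = 0 := by
  unfold coinPair
  rw [(hindep.indepFun (by omega)).integral_fun_mul_eq_mul_integral
    (hUmeas _).aestronglyMeasurable (hUmeas _).aestronglyMeasurable,
    integral_eq_zero_of_symmetric_sign (hUmeas _) (hval _) (hsymm _), zero_mul]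

lemma integral_coinPair_mul_coinPair [IsProbabilityMeasure P] (hUmeas : ∀ k, Measurable (U k))
    (hindep : iIndepFun U P) (hval : ∀ k ω, U k ω = 1 ∨ U k ω = -1)
    (hsymm : ∀ k, P {ω | U k ω = 1} = P {ω | U k ω = -1}) (n l : ℕ) :
    ∫ ω, coinPair U n ω * coinPair U l ω ∂P = if n = l then 1 else 0 := by
  split_ifs with hnl
  · subst hnl
    have hsq : ∀ ω, coinPair U n ω * coinPair U n ω = 1 := fun ω => by
      rcases coinPair_eq_one_or_neg_one hval n ω with h | h <;> simp [h]
    simp [hsq]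
  · have hpair : IndepFun (coinPair U n) (coinPair U l) P :=
      hindep.indepFun_mul_mul hUmeas _ _ _ _ (by omega) (by omega) (by omega) (by omega)
    rw [hpair.integral_fun_mul_eq_mul_integral (measurable_coinPair hUmeas n).aestronglyMeasurable
      (measurable_coinPair hUmeas l).aestronglyMeasurable,
      integral_coinPair hUmeas hindep hval hsymm, zero_mul]

lemma coinFiltration_le (hUmeas : ∀ k, Measurable (U k)) {X : ℝ → Ω → ℝ}
    (hXmeas : ∀ t, Measurable (X t)) (t : ℝ) : coinFiltration U X t ≤ m :=
  sup_le (iSup_le fun _ => (hUmeas _).comap_le) (iSup₂_le fun r _ => (hXmeas r).comap_le)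

lemma measurable_coinFiltration_self {X : ℝ → Ω → ℝ} {s : ℝ} (hs : 0 ≤ s) :
    Measurable[coinFiltration U X s] (X s) :=
  Measurable.of_comap_le <| le_sup_of_le_right <|
    le_iSup₂ (f := fun r (_ : r ∈ Set.Icc 0 s) => MeasurableSpace.comap (X r) inferInstance)
      s ⟨hs, le_rfl⟩

lemma indep_coinFiltration_comap_coin (hUmeas : ∀ k, Measurable (U k))
    (hindep : iIndepFun U P) {X : ℝ → Ω → ℝ}
    (hconv : ∀ r, 0 ≤ r → ∀ᵐ ω ∂P, Tendsto (jumpSum U r · ω) atTop (𝓝 (X r ω)))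
    {s : ℝ} {n : ℕ} (hn : s < 1 - 1 / ((n : ℝ) + 1)) :
    Indep (coinFiltration U X s)
      (MeasurableSpace.comap (U (2 * (n + 1) + 1)) inferInstance) P := by
  set k := 2 * (n + 1) + 1
  set G := ⨆ j ∈ ({k}ᶜ : Set ℕ), MeasurableSpace.comap (U j) inferInstance
  have hG : Indep G (MeasurableSpace.comap (U k) inferInstance) P := by
    have h := indep_iSup_of_disjoint (fun j => (hUmeas j).comap_le) hindep.iIndep
      (disjoint_compl_left (a := ({k} : Set ℕ)))
    simp only [Set.mem_singleton_iff, iSup_iSup_eq_left] at h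
    exact h
  have hUG : ∀ j ≠ k, Measurable[G] (U j) := fun j hj =>
    Measurable.of_comap_le (le_iSup₂ (f := fun j (_ : j ∈ ({k}ᶜ : Set ℕ)) =>
      MeasurableSpace.comap (U j) inferInstance) j hj)
  have hsumG : ∀ r ≤ s, ∀ N, Measurable[G] (jumpSum U r N) := by
    intro r hr N
    refine Finset.measurable_fun_sum _ fun p _ => ?_
    by_cases hp : 1 - 1 / ((p : ℝ) + 1) ≤ r
    · have hpn : p ≠ n := by
        rintro rfl
        exact hn.not_ge (hp.trans hr)
      exact ((hUG _ (by omega)).mul (hUG _ (by omega))).const_mul _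
    · simp [jumpCoeff_of_lt (not_le.mp hp)]
  refine indep_of_indep_of_le_left hG.eventuallyMeasurableSpace_ae_left <|
    sup_le (iSup_le fun p => ?_) (iSup₂_le fun r hr => ?_)
  · exact (hUG _ (by omega)).comap_le.trans le_eventuallyMeasurableSpace
  · exact Measurable.comap_le
      (eventuallyMeasurable_of_tendsto_ae (hsumG r hr.2) (hconv r hr.1))

lemma setIntegral_coinPair_eq_zero [IsFiniteMeasure P] (hUmeas : ∀ k, Measurable (U k))
    (hindep : iIndepFun U P) (hval : ∀ k ω, U k ω = 1 ∨ U k ω = -1)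
    (hsymm : ∀ k, P {ω | U k ω = 1} = P {ω | U k ω = -1}) {X : ℝ → Ω → ℝ}
    (hXmeas : ∀ t, Measurable (X t))
    (hconv : ∀ r, 0 ≤ r → ∀ᵐ ω ∂P, Tendsto (jumpSum U r · ω) atTop (𝓝 (X r ω)))
    {s : ℝ} {n : ℕ} (hn : s < 1 - 1 / ((n : ℝ) + 1)) {A : Set Ω}
    (hA : MeasurableSet[coinFiltration U X s] A) :
    ∫ ω in A, coinPair U n ω ∂P = 0 :=
  setIntegral_mul_eq_zero_of_indep (coinFiltration_le hUmeas hXmeas s)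
    (Measurable.of_comap_le (le_sup_of_le_left (le_iSup (fun p : ℕ =>
      MeasurableSpace.comap (U (2 * (p + 1))) inferInstance) n)))
    (hUmeas _).aestronglyMeasurable (indep_coinFiltration_comap_coin hUmeas hindep hconv hn)
    (integral_eq_zero_of_symmetric_sign (hUmeas _) (hval _) (hsymm _)) hA

lemma setIntegral_jumpSum_eq [IsFiniteMeasure P] (hUmeas : ∀ k, Measurable (U k))
    (hindep : iIndepFun U P) (hval : ∀ k ω, U k ω = 1 ∨ U k ω = -1)
    (hsymm : ∀ k, P {ω | U k ω = 1} = P {ω | U k ω = -1}) {X : ℝ → Ω → ℝ}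
    (hXmeas : ∀ t, Measurable (X t))
    (hconv : ∀ r, 0 ≤ r → ∀ᵐ ω ∂P, Tendsto (jumpSum U r · ω) atTop (𝓝 (X r ω)))
    {s t : ℝ} (hst : s ≤ t) {A : Set Ω} (hA : MeasurableSet[coinFiltration U X s] A) (N : ℕ) :
    ∫ ω in A, jumpSum U t N ω ∂P = ∫ ω in A, jumpSum U s N ω ∂P := by
  have hint : ∀ r n, Integrable (fun ω => jumpCoeff r n * coinPair U n ω) (P.restrict A) :=
    fun r n => (((memLp_coinPair hUmeas hval 1 n).integrable le_rfl).const_mul _).restrict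
  unfold jumpSum
  rw [integral_finsetSum _ fun n _ => hint t n, integral_finsetSum _ fun n _ => hint s n]
  refine Finset.sum_congr rfl fun n _ => ?_
  rw [integral_const_mul, integral_const_mul]
  by_cases hn : 1 - 1 / ((n : ℝ) + 1) ≤ s
  · rw [jumpCoeff, jumpCoeff, if_pos hn, if_pos (hn.trans hst)]
  · rw [setIntegral_coinPair_eq_zero hUmeas hindep hval hsymm hXmeas hconv (not_le.mp hn) hA,
      mul_zero, mul_zero]

end JumpProcess

/-- Let `U_k` be i.i.d. symmetric `±1`-valued, `a_n = 1 - 1/n`, and `X_t` the (a.s. convergent)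
sum `Σ_{n : a_n ≤ t} (1/n) U_{2n} U_{2n+1}`. With
`F_t = σ({U_{2n} : n ≥ 1} ∪ {X_s : s ≤ t})`, the process `X` is an `(F_t)`-martingale. -/
theorem jump_process_martingale
    {Ω : Type*} {m : MeasurableSpace Ω} (P : Measure Ω) [IsProbabilityMeasure P]
    (U : ℕ → Ω → ℝ)
    (hUmeas : ∀ k, Measurable (U k))
    (hindep : iIndepFun U P)
    (hval : ∀ k ω, U k ω = 1 ∨ U k ω = -1)
    (hdist : ∀ k, P {ω | U k ω = 1} = 1/2 ∧ P {ω | U k ω = -1} = 1/2)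
    (X : ℝ → Ω → ℝ) (hXmeas : ∀ t, Measurable (X t))
    (hX : ∀ t : ℝ, 0 ≤ t → ∀ᵐ ω ∂P,
      Tendsto (fun N : ℕ => ∑ n ∈ Finset.range N,
          if 1 - 1 / ((n:ℝ) + 1) ≤ t then
            (1 / ((n:ℝ) + 1)) * (U (2 * (n + 1)) ω * U (2 * (n + 1) + 1) ω)
          else 0)
        atTop (nhds (X t ω)))
    (F : ℝ → MeasurableSpace Ω)
    (hF : ∀ t : ℝ, F t =
      (⨆ n : ℕ, MeasurableSpace.comap (U (2 * (n + 1))) inferInstance) ⊔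
        (⨆ s ∈ Set.Icc (0:ℝ) t, MeasurableSpace.comap (X s) inferInstance)) :
    (∀ t : ℝ, 0 ≤ t → Integrable (X t) P) ∧
    (∀ s t : ℝ, 0 ≤ s → s ≤ t → P[X t|F s] =ᵐ[P] X s) := by
  obtain rfl : F = coinFiltration U X := funext hF
  have hsymm : ∀ k, P {ω | U k ω = 1} = P {ω | U k ω = -1} := fun k =>
    (hdist k).1.trans (hdist k).2.symm
  have hconv : ∀ t, 0 ≤ t → ∀ᵐ ω ∂P, Tendsto (jumpSum U t · ω) atTop (𝓝 (X t ω)) := by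
    intro t ht
    filter_upwards [hX t ht] with ω h
    simpa only [jumpSum, jumpCoeff, coinPair, ite_mul, zero_mul] using h
  have hv := memLp_coinPair (P := P) hUmeas hval 2
  have horth := integral_coinPair_mul_coinPair hUmeas hindep hval hsymm
  have hint : ∀ t, 0 ≤ t → Integrable (X t) P := fun t ht =>
    (memLp_two_and_tendsto_eLpNorm_of_orthonormal hv horth (summable_jumpCoeff_sq t)
      (hconv t ht)).1.integrable one_le_two
  have hsetIntegral : ∀ r, 0 ≤ r → ∀ A, Tendsto (fun N => ∫ ω in A, jumpSum U r N ω ∂P) atTop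
      (𝓝 (∫ ω in A, X r ω ∂P)) := fun r hr =>
    tendsto_setIntegral_of_orthonormal hv horth (summable_jumpCoeff_sq r) (hconv r hr)
  refine ⟨hint, fun s t hs hst => ?_⟩
  refine (ae_eq_condExp_of_forall_setIntegral_eq (coinFiltration_le hUmeas hXmeas s)
    (hint t (hs.trans hst)) (fun A _ _ => (hint s hs).integrableOn) (fun A hA _ => ?_) ?_).symm
  · exact tendsto_nhds_unique (hsetIntegral s hs A) <| (hsetIntegral t (hs.trans hst) A).congr
      (setIntegral_jumpSum_eq hUmeas hindep hval hsymm hXmeas hconv hst hA)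
  · exact (measurable_coinFiltration_self hs).aestronglyMeasurable
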